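/- arXiv:2103.04861 — 3 statements merged into one kernel-verified Lean document; each statement's English description precedes it below -/
import Mathlib

section
/- Define the differential operator L_1 u = −u'' − (1/r)u' + (1/r²)u. Then for all r > 0, L_1 applied to the function r ↦ r(−I_1(r)² + I_0(r)·I_2(r)) equals 4·I_1(r)·(I_0(r) − I_1(r)/r). -/
open Real Filter Set Topology
open scoped Nat

/-- Modified Bessel function of the first kind of (integer) order `n`. -/
noncomputable def besselI (n : ℕ) (r : ℝ) : ℝ :=
  ∑' k : ℕ, (1 / (k.factorial * Real.Gamma (n + k + 1))) * (r / 2) ^ (n + 2 * k)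

/-- `P n r = I_{n+1}(r) / (r * I_n(r))`. -/
noncomputable def P (n : ℕ) (r : ℝ) : ℝ := besselI (n + 1) r / (r * besselI n r)

/-- The operator `L_1 u = -u'' - (1/r) u' + (1/r^2) u`. -/
noncomputable def L1 (u : ℝ → ℝ) (r : ℝ) : ℝ :=
  -(deriv (deriv u) r) - (1 / r) * deriv u r + (1 / r ^ 2) * u r

/-!
Write `I_n(x) = (x/2)^n S_n((x/2)^2)` with the entire series `S_n(y) = ∑ y^k / (k! (n+k)!)`.
Termwise, `S_n' = S_{n+1}` and `S_n = (n+1) S_{n+1} + y S_{n+2}`; these give `I_0' = I_1`,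
`I_1' = I_0 - I_1/r` and `I_2 = I_0 - 2 I_1/r`. Eliminating `I_2`, the function
`u = r(-I_1² + I_0 I_2)` has `u' = -I_0² - I_1² + 2 I_0 I_1/r`, and `L_1 u` becomes a polynomial
identity in `I_0`, `I_1`, `1/r`.
-/

section FactorialSeries

variable {c : ℕ → ℝ} {C : ℝ}

theorem summable_mul_pow_of_abs_le_div_factorial (hc : ∀ k, |c k| ≤ C / k !) (y : ℝ) :
    Summable fun k => c k * y ^ k := by
  refine Summable.of_norm_bounded ((Real.summable_pow_div_factorial |y|).mul_left C) fun k => ?_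
  calc ‖c k * y ^ k‖ = |c k| * |y| ^ k := by rw [Real.norm_eq_abs, abs_mul, abs_pow]
    _ ≤ C / k ! * |y| ^ k := mul_le_mul_of_nonneg_right (hc k) (by positivity)
    _ = C * (|y| ^ k / k !) := by ring

theorem abs_mul_succ_le_div_factorial (hc : ∀ k, |c k| ≤ C / k !) (k : ℕ) :
    |c (k + 1) * (k + 1)| ≤ C / k ! := by
  have hk : (0 : ℝ) < k + 1 := by positivity
  calc |c (k + 1) * (k + 1)| = |c (k + 1)| * (k + 1) := by rw [abs_mul, abs_of_pos hk]
    _ ≤ C / (k + 1)! * (k + 1) := mul_le_mul_of_nonneg_right (hc _) hk.le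
    _ = C / k ! := by rw [Nat.factorial_succ]; push_cast; field_simp

theorem hasDerivAt_tsum_mul_pow (hc : ∀ k, |c k| ≤ C / k !) (y : ℝ) :
    HasDerivAt (fun z => ∑' k, c k * z ^ k) (∑' k, c (k + 1) * (k + 1) * y ^ k) y := by
  have hshift :
      (fun z => ∑' k, c k * z ^ k) = fun z => c 0 + ∑' k, c (k + 1) * z ^ (k + 1) := by
    funext z
    rw [(summable_mul_pow_of_abs_le_div_factorial hc z).tsum_eq_zero_add, pow_zero, mul_one]
  rw [hshift]
  set R := |y| + 1
  have hy : y ∈ Ioo (-R) R := abs_lt.mp (lt_add_one _)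
  refine (hasDerivAt_tsum_of_isPreconnected (u := fun k => C * (R ^ k / k !))
    (g' := fun k z => c (k + 1) * ((k + 1 : ℕ) * z ^ k))
    ((Real.summable_pow_div_factorial R).mul_left C) isOpen_Ioo isPreconnected_Ioo
    (fun k z _ => (hasDerivAt_pow (k + 1) z).const_mul _) (fun k z hz => ?_) hy
    ((summable_mul_pow_of_abs_le_div_factorial hc y).comp_injective (add_left_injective 1))
    hy).const_add _ |>.congr_deriv ?_
  · have hzR : |z| ≤ R := (abs_lt.mpr hz).le
    calc ‖c (k + 1) * ((k + 1 : ℕ) * z ^ k)‖ = |c (k + 1) * (k + 1)| * |z| ^ k := by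
          rw [Real.norm_eq_abs, ← abs_pow, ← abs_mul]; push_cast; rw [mul_assoc]
      _ ≤ C / k ! * R ^ k :=
          mul_le_mul (abs_mul_succ_le_div_factorial hc k) (pow_le_pow_left₀ (abs_nonneg z) hzR k)
            (by positivity) ((abs_nonneg _).trans (abs_mul_succ_le_div_factorial hc k))
      _ = C * (R ^ k / k !) := by ring
  · push_cast
    exact tsum_congr fun k => by ring

end FactorialSeries

noncomputable def besselCoeff (n k : ℕ) : ℝ := 1 / (k ! * (n + k)!)

noncomputable def besselSeries (n : ℕ) (y : ℝ) : ℝ := ∑' k, besselCoeff n k * y ^ k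

theorem abs_besselCoeff_le (n k : ℕ) : |besselCoeff n k| ≤ 1 / k ! := by
  rw [besselCoeff, abs_of_nonneg (by positivity)]
  gcongr
  exact le_mul_of_one_le_right (by positivity) (by exact_mod_cast (n + k).factorial_pos)

theorem besselCoeff_succ_mul (n k : ℕ) :
    besselCoeff n (k + 1) * (k + 1) = besselCoeff (n + 1) k := by
  simp only [besselCoeff, Nat.factorial_succ, show n + (k + 1) = n + 1 + k by ring]
  push_cast
  field_simp

theorem besselCoeff_zero (n : ℕ) : besselCoeff n 0 = (n + 1) * besselCoeff (n + 1) 0 := by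
  simp only [besselCoeff, add_zero, Nat.factorial_succ]
  push_cast
  field_simp

theorem besselCoeff_succ_sub (n k : ℕ) :
    besselCoeff n (k + 1) - (n + 1) * besselCoeff (n + 1) (k + 1) = besselCoeff (n + 2) k := by
  simp only [besselCoeff, Nat.factorial_succ, show n + 1 + (k + 1) = n + (k + 1) + 1 by ring,
    show n + 2 + k = n + (k + 1) + 1 by ring]
  push_cast
  field_simp
  ring

theorem summable_besselCoeff_mul_pow (n : ℕ) (y : ℝ) :
    Summable fun k => besselCoeff n k * y ^ k :=
  summable_mul_pow_of_abs_le_div_factorial (abs_besselCoeff_le n) y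

theorem hasDerivAt_besselSeries (n : ℕ) (y : ℝ) :
    HasDerivAt (besselSeries n) (besselSeries (n + 1) y) y := by
  have h := hasDerivAt_tsum_mul_pow (abs_besselCoeff_le n) y
  simp only [besselCoeff_succ_mul] at h
  exact h

theorem besselSeries_eq_add (n : ℕ) (y : ℝ) :
    besselSeries n y = (n + 1) * besselSeries (n + 1) y + y * besselSeries (n + 2) y := by
  have hs := summable_besselCoeff_mul_pow
  have hdiff : Summable fun k => (besselCoeff n k - (n + 1) * besselCoeff (n + 1) k) * y ^ k := by
    simpa only [sub_mul, mul_assoc] using (hs n y).sub ((hs (n + 1) y).mul_left ((n : ℝ) + 1))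
  calc besselSeries n y
      = (n + 1) * besselSeries (n + 1) y
          + ∑' k, (besselCoeff n k - (n + 1) * besselCoeff (n + 1) k) * y ^ k := by
        simp only [besselSeries, sub_mul, mul_assoc]
        rw [(hs n y).tsum_sub ((hs (n + 1) y).mul_left _), tsum_mul_left]
        ring
    _ = (n + 1) * besselSeries (n + 1) y + y * besselSeries (n + 2) y := by
        rw [hdiff.tsum_eq_zero_add, ← besselCoeff_zero, sub_self, zero_mul, zero_add]
        congr 1
        rw [besselSeries, ← tsum_mul_left]
        exact tsum_congr fun k => by rw [besselCoeff_succ_sub, pow_succ]; ring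

theorem besselI_eq_besselSeries (n : ℕ) (x : ℝ) :
    besselI n x = (x / 2) ^ n * besselSeries n ((x / 2) ^ 2) := by
  rw [besselI, besselSeries, ← tsum_mul_left]
  refine tsum_congr fun k => ?_
  rw [show (n : ℝ) + k + 1 = (n + k : ℕ) + 1 by push_cast; ring, Real.Gamma_nat_eq_factorial,
    besselCoeff, pow_add, pow_mul]
  ring

theorem hasDerivAt_besselSeries_half_sq (n : ℕ) (x : ℝ) :
    HasDerivAt (fun x => besselSeries n ((x / 2) ^ 2))
      (x / 2 * besselSeries (n + 1) ((x / 2) ^ 2)) x := by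
  have hsq : HasDerivAt (fun x : ℝ => (x / 2) ^ 2) (x / 2) x :=
    (((hasDerivAt_id' x).div_const 2).fun_pow 2).congr_deriv (by norm_num; ring)
  exact ((hasDerivAt_besselSeries n _).comp x hsq).congr_deriv (mul_comm _ _)

theorem hasDerivAt_besselI_zero (x : ℝ) : HasDerivAt (besselI 0) (besselI 1 x) x := by
  have hfun : besselI 0 = fun x => besselSeries 0 ((x / 2) ^ 2) :=
    funext fun x => by rw [besselI_eq_besselSeries, pow_zero, one_mul]
  rw [hfun, besselI_eq_besselSeries 1, pow_one]
  exact hasDerivAt_besselSeries_half_sq 0 x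

theorem besselI_add_two (n : ℕ) {x : ℝ} (hx : x ≠ 0) :
    besselI (n + 2) x = besselI n x - 2 * (n + 1) * besselI (n + 1) x / x := by
  rw [besselI_eq_besselSeries, besselI_eq_besselSeries n, besselI_eq_besselSeries (n + 1),
    besselSeries_eq_add n]
  field_simp
  ring

theorem hasDerivAt_besselI_succ (n : ℕ) {x : ℝ} (hx : x ≠ 0) :
    HasDerivAt (besselI (n + 1)) (besselI n x - (n + 1) * besselI (n + 1) x / x) x := by
  have h := (((hasDerivAt_id' x).div_const 2).fun_pow (n + 1)).fun_mul
    (hasDerivAt_besselSeries_half_sq (n + 1) x)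
  refine (h.congr_deriv ?_).congr_of_eventuallyEq
    (Eventually.of_forall fun y => besselI_eq_besselSeries (n + 1) y)
  rw [besselI_eq_besselSeries n, besselI_eq_besselSeries (n + 1), besselSeries_eq_add n]
  push_cast
  field_simp
  ring

theorem L1_eq_of_hasDerivAt {u u' : ℝ → ℝ} {u'' r : ℝ}
    (hu : ∀ᶠ s in 𝓝 r, HasDerivAt u (u' s) s) (hu' : HasDerivAt u' u'' r) :
    L1 u r = -u'' - (1 / r) * u' r + (1 / r ^ 2) * u r := by
  have hderiv : deriv u =ᶠ[𝓝 r] u' := hu.mono fun s hs => hs.deriv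
  rw [L1, hderiv.deriv_eq, hu'.deriv, hderiv.eq_of_nhds]

theorem L1_apply (r : ℝ) (hr : 0 < r) :
    L1 (fun s : ℝ => s * (-(besselI 1 s) ^ 2 + besselI 0 s * besselI 2 s)) r
      = 4 * besselI 1 r * (besselI 0 r - besselI 1 r / r) := by
  have hI1 {s : ℝ} (hs : s ≠ 0) : HasDerivAt (besselI 1) (besselI 0 s - besselI 1 s / s) s := by
    simpa using hasDerivAt_besselI_succ 0 hs
  have hI2 {s : ℝ} (hs : s ≠ 0) : besselI 2 s = besselI 0 s - 2 * besselI 1 s / s := by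
    simpa using besselI_add_two 0 hs
  set G : ℝ → ℝ := fun s =>
    -besselI 0 s ^ 2 - besselI 1 s ^ 2 + 2 * besselI 0 s * besselI 1 s / s
  have hF : ∀ᶠ s in 𝓝 r,
      HasDerivAt (fun s => s * (-besselI 1 s ^ 2 + besselI 0 s * besselI 2 s)) (G s) s := by
    filter_upwards [Ioi_mem_nhds hr] with s (hs_pos : 0 < s)
    have hs := hs_pos.ne'
    refine ((hasDerivAt_id' s).mul (((hI1 hs).fun_pow 2).fun_neg.fun_add
      ((hasDerivAt_besselI_zero s).fun_mul (hasDerivAt_besselI_succ 1 hs)))).congr_deriv ?_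
    simp only [G, hI2 hs]
    push_cast
    field_simp
    ring
  have hG : HasDerivAt G _ r :=
    ((((hasDerivAt_besselI_zero r).fun_pow 2).fun_neg.fun_sub ((hI1 hr.ne').fun_pow 2)).fun_add
      ((((hasDerivAt_besselI_zero r).const_mul 2).fun_mul (hI1 hr.ne')).fun_div
        (hasDerivAt_id' r) hr.ne'))
  rw [L1_eq_of_hasDerivAt hF hG, hI2 hr.ne']
  simp only [G]
  field_simp
  ring
end

section
/- For every nonnegative integer n and every r > 0, P_n(r) > P_{n+1}(r). -/
/-!
The product `I_a(r) I_b(r)` is a power series in `x = r / 2` whose coefficient of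
`x ^ (a + b + 2m)` is `C(a + b + 2m, m) / ((a + m)! (b + m)!)`: for `k + l = m` the Cauchy
product term `1 / (k! (a + k)! l! (b + l)!)` equals `C(b + m, k) C(a + m, l) / ((a + m)! (b + m)!)`,
and Vandermonde sums these binomials. For `(a, b) = (n, n + 2)` and `(n + 1, n + 1)` the
numerators agree and the denominators compare as `(c + 1)!² < c! (c + 2)!`, so the Turán
inequality `I_n I_{n+2} < I_{n+1}²` holds coefficientwise; with `I_k(r) > 0` it is the claim.
-/

open Real Filter Set

open scoped Nat
open Finset.HasAntidiagonal (antidiagonal)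

noncomputable def besselTerm (a : ℕ) (x : ℝ) (k : ℕ) : ℝ :=
  x ^ (a + 2 * k) / (k ! * (a + k)!)

theorem besselI_eq_tsum_besselTerm (a : ℕ) (r : ℝ) :
    besselI a r = ∑' k, besselTerm a (r / 2) k := by
  refine tsum_congr fun k => ?_
  rw [besselTerm, one_div_mul_eq_div]
  congr 3
  exact_mod_cast Real.Gamma_nat_eq_factorial (a + k)

theorem summable_norm_besselTerm (a : ℕ) (x : ℝ) :
    Summable fun k => ‖besselTerm a x k‖ := by
  refine .of_nonneg_of_le (fun _ => norm_nonneg _) (fun k => ?_)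
    ((Real.summable_pow_div_factorial (x ^ 2)).mul_left (|x| ^ a))
  calc ‖besselTerm a x k‖ = |x| ^ (a + 2 * k) / (k ! * (a + k)!) := by
        rw [besselTerm, norm_div, norm_pow, Real.norm_eq_abs, Real.norm_of_nonneg (by positivity)]
    _ ≤ |x| ^ (a + 2 * k) / k ! := by
        gcongr
        exact le_mul_of_one_le_right (by positivity) (mod_cast (a + k).factorial_pos)
    _ = |x| ^ a * ((x ^ 2) ^ k / k !) := by
        rw [pow_add, pow_mul, sq_abs, mul_div_assoc]

theorem besselTerm_pos (a : ℕ) {x : ℝ} (hx : 0 < x) (k : ℕ) : 0 < besselTerm a x k := by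
  unfold besselTerm; positivity

theorem besselI_pos (a : ℕ) {r : ℝ} (hr : 0 < r) : 0 < besselI a r := by
  have hx : 0 < r / 2 := by positivity
  rw [besselI_eq_tsum_besselTerm]
  exact (summable_norm_besselTerm a _).of_norm.tsum_pos (fun k => (besselTerm_pos a hx k).le) 0
    (besselTerm_pos a hx 0)

theorem besselTerm_mul_besselTerm (a b k l : ℕ) (x : ℝ) :
    besselTerm a x k * besselTerm b x l =
      ((b + (k + l)).choose k * (a + (k + l)).choose l : ℝ) / ((a + (k + l))! * (b + (k + l))!) *
        x ^ (a + b + 2 * (k + l)) := by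
  have hpow : x ^ (a + b + 2 * (k + l)) = x ^ (a + 2 * k) * x ^ (b + 2 * l) := by
    rw [← pow_add]; congr 1; ring
  rw [show b + (k + l) = b + l + k by ring, show a + (k + l) = a + k + l by ring,
    ← Nat.add_choose_mul_factorial_mul_factorial (b + l) k,
    ← Nat.add_choose_mul_factorial_mul_factorial (a + k) l, hpow, besselTerm, besselTerm]
  have hb : ((b + l + k).choose k : ℝ) ≠ 0 := mod_cast (Nat.choose_pos (by omega)).ne'
  have ha : ((a + k + l).choose l : ℝ) ≠ 0 := mod_cast (Nat.choose_pos (by omega)).ne'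
  push_cast
  field_simp

noncomputable def besselMulCoeff (a b m : ℕ) : ℝ :=
  (a + b + 2 * m).choose m / ((a + m)! * (b + m)!)

theorem sum_antidiagonal_besselTerm_mul_besselTerm (a b m : ℕ) (x : ℝ) :
    ∑ kl ∈ antidiagonal m, besselTerm a x kl.1 * besselTerm b x kl.2 =
      besselMulCoeff a b m * x ^ (a + b + 2 * m) := by
  have hvandermonde : (a + b + 2 * m).choose m =
      ∑ kl ∈ antidiagonal m, (b + m).choose kl.1 * (a + m).choose kl.2 := by
    rw [← Nat.add_choose_eq]; congr 1; ring
  rw [besselMulCoeff, hvandermonde, Nat.cast_sum, Finset.sum_div, Finset.sum_mul]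
  refine Finset.sum_congr rfl fun kl hkl => ?_
  rw [Finset.HasAntidiagonal.mem_antidiagonal] at hkl
  rw [besselTerm_mul_besselTerm, hkl]
  push_cast; ring

theorem hasSum_besselI_mul_besselI (a b : ℕ) (r : ℝ) :
    HasSum (fun m => besselMulCoeff a b m * (r / 2) ^ (a + b + 2 * m))
      (besselI a r * besselI b r) := by
  have ha := summable_norm_besselTerm a (r / 2)
  have hb := summable_norm_besselTerm b (r / 2)
  rw [besselI_eq_tsum_besselTerm, besselI_eq_tsum_besselTerm,
    tsum_mul_tsum_eq_tsum_sum_antidiagonal_of_summable_norm ha hb]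
  simpa only [sum_antidiagonal_besselTerm_mul_besselTerm] using
    (summable_norm_sum_mul_antidiagonal_of_summable_norm ha hb).of_norm.hasSum

theorem factorial_succ_sq_lt (c : ℕ) : (c + 1)! ^ 2 < c ! * (c + 2)! := by
  have := c.factorial_pos
  calc (c + 1)! ^ 2 = (c + 1) * (c + 1) * (c ! * c !) := by rw [Nat.factorial_succ]; ring
    _ < (c + 1) * (c + 2) * (c ! * c !) := by gcongr; omega
    _ = c ! * (c + 2)! := by rw [Nat.factorial_succ, Nat.factorial_succ]; ring

theorem besselMulCoeff_lt (n m : ℕ) :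
    besselMulCoeff n (n + 2) m < besselMulCoeff (n + 1) (n + 1) m := by
  have hfact := factorial_succ_sq_lt (n + m)
  rw [besselMulCoeff, besselMulCoeff, show n + 1 + (n + 1) = n + (n + 2) by ring,
    show n + 2 + m = n + m + 2 by ring, show n + 1 + m = n + m + 1 by ring, ← sq]
  refine div_lt_div_of_pos_left (mod_cast Nat.choose_pos (by omega)) (by positivity) ?_
  exact_mod_cast hfact

theorem besselI_mul_besselI_add_two_lt_sq (n : ℕ) {r : ℝ} (hr : r ≠ 0) :
    besselI n r * besselI (n + 2) r < besselI (n + 1) r ^ 2 := by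
  have hterm (m : ℕ) : besselMulCoeff n (n + 2) m * (r / 2) ^ (n + (n + 2) + 2 * m) <
      besselMulCoeff (n + 1) (n + 1) m * (r / 2) ^ (n + 1 + (n + 1) + 2 * m) := by
    rw [show n + 1 + (n + 1) = n + (n + 2) by ring]
    exact mul_lt_mul_of_pos_right (besselMulCoeff_lt n m)
      (Even.pow_pos ⟨n + 1 + m, by ring⟩ (by positivity))
  rw [sq]
  exact hasSum_lt (fun m => (hterm m).le) (hterm 0) (hasSum_besselI_mul_besselI n (n + 2) r)
    (hasSum_besselI_mul_besselI (n + 1) (n + 1) r)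

theorem P_strict_anti_in_n (n : ℕ) (r : ℝ) (hr : 0 < r) :
    P n r > P (n + 1) r := by
  have h0 := besselI_pos n hr
  have h1 := besselI_pos (n + 1) hr
  have hturan := besselI_mul_besselI_add_two_lt_sq n hr.ne'
  rw [gt_iff_lt, P, P, div_lt_div_iff₀ (by positivity) (by positivity)]
  linear_combination r * hturan
end

section
/- For all r > 0, P_0(r)² < 1/(4 + r²). -/
open Real Filter Set

open Finset

/-! Put `y = (r/2)²`. Then `I₀(r) = A(y)` and `I₁(r) = (r/2)·B(y)` for power series `A`, `B` with
positive coefficients, and the claim is `(1 + y)·B(y)² < A(y)²`. By Vandermonde's identity the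
Cauchy squares are `A² = ∑ a_m y^m`, `B² = ∑ b_m y^m` with `a_m = C(2m, m)/m!²` and
`b_m = C(2m+2, m+1)/(m!(m+2)!)`, and the central binomial recurrence gives
`a_{m+1} - b_{m+1} - b_m = m(m+1)/((m+2)²(m+3))·a_{m+1}`, which is `≥ 0` and `> 0` for `m ≥ 1`.
Since `a₀ = b₀`, comparing coefficients of `(1 + y)·B²` and `A²` gives the strict inequality. -/

lemma sum_range_mul_pow_mul_mul_pow (a b : ℕ → ℝ) (y : ℝ) (m : ℕ) :
    ∑ k ∈ range (m + 1), a k * y ^ k * (b (m - k) * y ^ (m - k)) =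
      (∑ k ∈ range (m + 1), a k * b (m - k)) * y ^ m := by
  rw [sum_mul]
  refine sum_congr rfl fun k hk => ?_
  rw [← pow_mul_pow_sub y (mem_range_succ_iff.mp hk)]
  ring

lemma choose_two_mul_add_eq_sum (n m : ℕ) :
    (2 * (n + m)).choose (n + m) =
      ∑ k ∈ range (m + 1), m.choose k * (2 * n + m).choose (n + m - k) := by
  rw [show 2 * (n + m) = m + (2 * n + m) by ring, Nat.add_choose_eq,
    Nat.sum_antidiagonal_eq_sum_range_succ_mk]
  symm
  refine sum_subset (range_subset_range.mpr (by omega)) fun k _ hk => ?_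
  rw [Nat.choose_eq_zero_of_lt (by simpa using hk), zero_mul]

lemma one_add_mul_tsum_mul_pow {f : ℕ → ℝ} {y : ℝ} (hf : Summable fun m => f m * y ^ m) :
    (1 + y) * ∑' m, f m * y ^ m = f 0 + ∑' m, (f (m + 1) + f m) * y ^ (m + 1) := by
  have hshift : Summable fun m => f (m + 1) * y ^ (m + 1) := (summable_nat_add_iff 1).mpr hf
  have hmul : Summable fun m => f m * y ^ (m + 1) :=
    (hf.mul_left y).congr fun m => by ring
  have hy : y * ∑' m, f m * y ^ m = ∑' m, f m * y ^ (m + 1) := by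
    rw [← hf.tsum_mul_left]; exact tsum_congr fun m => by ring
  rw [add_mul, one_mul, hy, hf.tsum_eq_zero_add, pow_zero, mul_one, add_assoc,
    ← hshift.tsum_add hmul]
  simp only [add_mul]

lemma one_add_mul_tsum_mul_pow_lt {f g : ℕ → ℝ} {y : ℝ} (hy : 0 < y)
    (hf : Summable fun m => f m * y ^ m) (hg : Summable fun m => g m * y ^ m)
    (h₀ : f 0 ≤ g 0) (hle : ∀ m, f (m + 1) + f m ≤ g (m + 1)) {m₀ : ℕ}
    (hlt : f (m₀ + 1) + f m₀ < g (m₀ + 1)) :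
    (1 + y) * ∑' m, f m * y ^ m < ∑' m, g m * y ^ m := by
  rw [one_add_mul_tsum_mul_pow hf, hg.tsum_eq_zero_add, pow_zero, mul_one]
  refine add_lt_add_of_le_of_lt h₀ (Summable.tsum_lt_tsum (i := m₀) ?_ ?_ ?_ ?_)
  · exact fun m => mul_le_mul_of_nonneg_right (hle m) (by positivity)
  · exact mul_lt_mul_of_pos_right hlt (by positivity)
  · exact (((summable_nat_add_iff 1).mpr hf).add (hf.mul_left y)).congr fun m => by ring
  · exact (summable_nat_add_iff 1).mpr hg

noncomputable def besselICoeff (n k : ℕ) : ℝ := 1 / (k.factorial * (n + k).factorial)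

noncomputable def besselICoeffSq (n m : ℕ) : ℝ :=
  ∑ k ∈ range (m + 1), besselICoeff n k * besselICoeff n (m - k)

lemma besselICoeff_pos (n k : ℕ) : 0 < besselICoeff n k := by
  unfold besselICoeff; positivity

lemma besselICoeffSq_pos (n m : ℕ) : 0 < besselICoeffSq n m :=
  sum_pos (fun k _ => mul_pos (besselICoeff_pos n k) (besselICoeff_pos n (m - k)))
    nonempty_range_add_one

lemma besselI_eq_tsum (n : ℕ) (r : ℝ) :
    besselI n r = (r / 2) ^ n * ∑' k, besselICoeff n k * ((r / 2) ^ 2) ^ k := by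
  rw [← tsum_mul_left, besselI]
  refine tsum_congr fun k => ?_
  have hΓ : Real.Gamma (n + k + 1) = (n + k).factorial := by
    exact_mod_cast Real.Gamma_nat_eq_factorial (n + k)
  rw [hΓ, besselICoeff, pow_add, pow_mul]
  ring

lemma summable_norm_besselICoeff_mul_pow (n : ℕ) (y : ℝ) :
    Summable fun k => ‖besselICoeff n k * y ^ k‖ := by
  refine (Real.summable_pow_div_factorial |y|).of_nonneg_of_le (fun _ => norm_nonneg _) fun k => ?_
  have h1 : (1 : ℝ) ≤ (n + k).factorial := by exact_mod_cast (n + k).factorial_pos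
  rw [norm_mul, norm_pow, Real.norm_eq_abs, Real.norm_eq_abs, abs_of_pos (besselICoeff_pos n k),
    besselICoeff, div_mul_eq_mul_div, one_mul]
  gcongr
  exact le_mul_of_one_le_right (by positivity) h1

lemma summable_besselICoeffSq_mul_pow (n : ℕ) (y : ℝ) :
    Summable fun m => besselICoeffSq n m * y ^ m :=
  (summable_norm_sum_mul_range_of_summable_norm (summable_norm_besselICoeff_mul_pow n y)
    (summable_norm_besselICoeff_mul_pow n y)).of_norm.congr
    (sum_range_mul_pow_mul_mul_pow _ _ y)

lemma tsum_besselICoeff_mul_pow_sq (n : ℕ) (y : ℝ) :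
    (∑' k, besselICoeff n k * y ^ k) ^ 2 = ∑' m, besselICoeffSq n m * y ^ m := by
  rw [sq, tsum_mul_tsum_eq_tsum_sum_range_of_summable_norm
    (summable_norm_besselICoeff_mul_pow n y) (summable_norm_besselICoeff_mul_pow n y)]
  exact tsum_congr (sum_range_mul_pow_mul_mul_pow _ _ y)

lemma besselICoeffSq_eq (n m : ℕ) :
    besselICoeffSq n m = (n + m).centralBinom / (m.factorial * (2 * n + m).factorial) := by
  rw [Nat.centralBinom_eq_two_mul_choose, choose_two_mul_add_eq_sum, besselICoeffSq,
    Nat.cast_sum, sum_div]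
  refine sum_congr rfl fun k hk => ?_
  have hkm : k ≤ m := mem_range_succ_iff.mp hk
  rw [Nat.cast_mul, Nat.cast_choose ℝ hkm, Nat.cast_choose ℝ (by omega : n + m - k ≤ 2 * n + m),
    show 2 * n + m - (n + m - k) = n + k by omega, besselICoeff, besselICoeff,
    show n + (m - k) = n + m - k by omega]
  field_simp

lemma besselICoeffSq_zero_succ_sub (m : ℕ) :
    besselICoeffSq 0 (m + 1) - besselICoeffSq 1 (m + 1) - besselICoeffSq 1 m =
      m * (m + 1) / ((m + 2) ^ 2 * (m + 3)) * besselICoeffSq 0 (m + 1) := by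
  have hrec : ((m + 2 : ℕ) : ℝ) * (m + 2).centralBinom =
      2 * (2 * (m + 1) + 1) * (m + 1).centralBinom := by
    exact_mod_cast Nat.succ_mul_centralBinom_succ (m + 1)
  simp only [besselICoeffSq_eq, zero_add, mul_zero, show 1 + (m + 1) = m + 2 by ring,
    show 1 + m = m + 1 by ring, mul_one, show 2 + (m + 1) = (m + 2) + 1 by ring,
    show 2 + m = m + 1 + 1 by ring, Nat.factorial_succ]
  push_cast at hrec ⊢
  have hB : ((m + 2).centralBinom : ℝ) =
      2 * (2 * (m + 1) + 1) * (m + 1).centralBinom / (m + 2) := by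
    rw [← hrec]; field_simp
  rw [hB]
  field_simp
  ring

lemma besselICoeffSq_one_succ_add_le (m : ℕ) :
    besselICoeffSq 1 (m + 1) + besselICoeffSq 1 m ≤ besselICoeffSq 0 (m + 1) := by
  have h := besselICoeffSq_zero_succ_sub m
  have : 0 ≤ m * (m + 1) / ((m + 2) ^ 2 * (m + 3)) * besselICoeffSq 0 (m + 1) :=
    mul_nonneg (by positivity) (besselICoeffSq_pos 0 (m + 1)).le
  linarith

lemma besselICoeffSq_one_succ_add_lt {m : ℕ} (hm : 0 < m) :
    besselICoeffSq 1 (m + 1) + besselICoeffSq 1 m < besselICoeffSq 0 (m + 1) := by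
  have h := besselICoeffSq_zero_succ_sub m
  have : 0 < m * (m + 1) / ((m + 2) ^ 2 * (m + 3)) * besselICoeffSq 0 (m + 1) :=
    mul_pos (by positivity) (besselICoeffSq_pos 0 (m + 1))
  linarith

theorem P0_sq_lt (r : ℝ) (hr : 0 < r) :
    (P 0 r) ^ 2 < 1 / (4 + r ^ 2) := by
  set y := (r / 2) ^ 2 with hy
  set A := ∑' k, besselICoeff 0 k * y ^ k
  set B := ∑' k, besselICoeff 1 k * y ^ k
  have hA : 0 < A := (summable_norm_besselICoeff_mul_pow 0 y).of_norm.tsum_pos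
    (fun k => (mul_pos (besselICoeff_pos 0 k) (by positivity)).le) 0
    (by simpa using besselICoeff_pos 0 0)
  have hP : P 0 r = B / (2 * A) := by
    rw [P, besselI_eq_tsum, besselI_eq_tsum, ← hy, zero_add, pow_zero, one_mul, pow_one]
    change r / 2 * B / (r * A) = B / (2 * A)
    field_simp
  have h₀ : besselICoeffSq 1 0 ≤ besselICoeffSq 0 0 := by
    norm_num [besselICoeffSq, besselICoeff]
  have hcmp : (1 + y) * B ^ 2 < A ^ 2 := by
    rw [tsum_besselICoeff_mul_pow_sq, tsum_besselICoeff_mul_pow_sq]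
    exact one_add_mul_tsum_mul_pow_lt (by positivity) (summable_besselICoeffSq_mul_pow 1 y)
      (summable_besselICoeffSq_mul_pow 0 y) h₀ besselICoeffSq_one_succ_add_le
      (besselICoeffSq_one_succ_add_lt one_pos)
  rw [hP, div_pow, div_lt_div_iff₀ (by positivity) (by positivity)]
  calc B ^ 2 * (4 + r ^ 2) = 4 * ((1 + y) * B ^ 2) := by rw [hy]; ring
    _ < 4 * A ^ 2 := by linarith
    _ = 1 * (2 * A) ^ 2 := by ring
end
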